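/- For every 0 < α ≤ 1, c_η^N(α) ≤ c_η^2(α). -/

import Mathlib

open MeasureTheory ProbabilityTheory

noncomputable section

def midN (N : ℕ) (p : ℝ × (Fin (N-1) → ℝ)) : ℝ :=
  (max p.1 (⨆ i, p.2 i) + min p.1 (⨅ i, p.2 i)) / 2

def accN (N : ℕ) (η Δ : ℝ) : Set (ℝ × (Fin (N-1) → ℝ)) :=
  {p | max p.1 (⨆ i, p.2 i) - min p.1 (⨅ i, p.2 i) ≤ η * Δ}

def PA_N (N : ℕ) (η Δ : ℝ) (μ : Measure ℝ) (ν : Measure (Fin (N-1) → ℝ)) : ℝ :=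
  ((μ.prod ν) (accN N η Δ)).toReal

def MSE_N (N : ℕ) (η Δ : ℝ) (μ : Measure ℝ) (ν : Measure (Fin (N-1) → ℝ)) : ℝ :=
  ∫ p, (midN N p) ^ 2 ∂((μ.prod ν)[|accN N η Δ])

def mid2 (p : ℝ × ℝ) : ℝ := (max p.1 p.2 + min p.1 p.2) / 2

def acc2 (η Δ : ℝ) : Set (ℝ × ℝ) := {p | max p.1 p.2 - min p.1 p.2 ≤ η * Δ}

def PA_2 (η Δ : ℝ) (μ κ : Measure ℝ) : ℝ := ((μ.prod κ) (acc2 η Δ)).toReal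

def MSE_2 (η Δ : ℝ) (μ κ : Measure ℝ) : ℝ :=
  ∫ p, (mid2 p) ^ 2 ∂((μ.prod κ)[|acc2 η Δ])

def cN (N : ℕ) (η Δ : ℝ) (μ : Measure ℝ) (α : ℝ) : ℝ :=
  sSup {r | ∃ ν : Measure (Fin (N-1) → ℝ), IsProbabilityMeasure ν ∧
    α ≤ PA_N N η Δ μ ν ∧ r = MSE_N N η Δ μ ν}

def c2 (η Δ : ℝ) (μ : Measure ℝ) (α : ℝ) : ℝ :=
  sSup {r | ∃ κ : Measure ℝ, IsProbabilityMeasure κ ∧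
    α ≤ PA_2 η Δ μ κ ∧ r = MSE_2 η Δ μ κ}

def IsBestResponseN (N : ℕ) (η Δ : ℝ) (μ : Measure ℝ) (QAD : ℝ → ℝ → ℝ)
    (ν : Measure (Fin (N-1) → ℝ)) : Prop :=
  IsProbabilityMeasure ν ∧ 0 < PA_N N η Δ μ ν ∧
    ∀ ν' : Measure (Fin (N-1) → ℝ), IsProbabilityMeasure ν' → 0 < PA_N N η Δ μ ν' →
      QAD (MSE_N N η Δ μ ν') (PA_N N η Δ μ ν') ≤ QAD (MSE_N N η Δ μ ν) (PA_N N η Δ μ ν)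

def IsBestResponse2 (η Δ : ℝ) (μ : Measure ℝ) (QAD : ℝ → ℝ → ℝ) (κ : Measure ℝ) : Prop :=
  IsProbabilityMeasure κ ∧ 0 < PA_2 η Δ μ κ ∧
    ∀ κ' : Measure ℝ, IsProbabilityMeasure κ' → 0 < PA_2 η Δ μ κ' →
      QAD (MSE_2 η Δ μ κ') (PA_2 η Δ μ κ') ≤ QAD (MSE_2 η Δ μ κ) (PA_2 η Δ μ κ)

/-!
A 2-node adversary can imitate an `N`-node one with a single report: when the `N - 1` reports
span `[lo, hi]` with `hi - lo ≤ ηΔ` it reports the endpoint farther from `0` (`hi` if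
`hi + lo ≥ 0`, else `lo`), and otherwise it reports `(η + 2)Δ`, which no honest value accepts.
Because `η ≥ 2` and the honest value `n` lies in `[-Δ, Δ]`, `n` is accepted against the single
report exactly when it is accepted against the `N - 1` reports, and the accepted midpoint only
moves away from `0`. So the imitating strategy has the same acceptance probability and at least
the same MSE; taking suprema gives the claim, the 2-node MSEs being bounded by `(Δ + ηΔ/2)²`.
-/

open Set

def mimic (η Δ lo hi : ℝ) : ℝ :=
  if hi - lo ≤ η * Δ then if 0 ≤ hi + lo then hi else lo else (η + 2) * Δ

section Mimic

variable {η Δ n lo hi : ℝ}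

lemma abs_sub_mimic_le_iff (hη : 2 ≤ η) (hΔ : 0 < Δ) (hn : |n| ≤ Δ) (hlh : lo ≤ hi) :
    |n - mimic η Δ lo hi| ≤ η * Δ ↔ max n hi - min n lo ≤ η * Δ := by
  have h2Δ : 2 * Δ ≤ η * Δ := by nlinarith
  rw [abs_le] at hn
  unfold mimic
  split_ifs <;> rw [abs_le] <;>
    rcases le_total n hi with h1 | h1 <;> rcases le_total n lo with h2 | h2 <;>
    simp only [max_eq_left, max_eq_right, min_eq_left, min_eq_right, h1, h2] <;>
    constructor <;> intro h <;>
    first | (obtain ⟨h₁, h₂⟩ := h; linarith) | (constructor <;> linarith)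

lemma sq_max_add_min_le_sq_add_mimic (hlh : lo ≤ hi) (hacc : max n hi - min n lo ≤ η * Δ) :
    (max n hi + min n lo) ^ 2 ≤ (n + mimic η Δ lo hi) ^ 2 := by
  have hspread : hi - lo ≤ η * Δ := by
    linarith [le_max_right n hi, min_le_right n lo]
  unfold mimic
  rw [if_pos hspread]
  split_ifs <;>
    rcases le_total n hi with h1 | h1 <;> rcases le_total n lo with h2 | h2 <;>
    simp only [max_eq_left, max_eq_right, min_eq_left, min_eq_right, h1, h2] at hacc ⊢ <;>
    nlinarith

end Mimic

lemma iInf_le_iSup_of_finite {ι : Type*} [Finite ι] (x : ι → ℝ) : ⨅ i, x i ≤ ⨆ i, x i := by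
  rcases isEmpty_or_nonempty ι with hι | hι
  · simp only [Real.iInf_of_isEmpty, Real.iSup_of_isEmpty, le_refl]
  · exact ciInf_le_ciSup (Finite.bddBelow_range x) (Finite.bddAbove_range x)

def mimicReport (η Δ : ℝ) {ι : Type*} (x : ι → ℝ) : ℝ :=
  mimic η Δ (⨅ i, x i) (⨆ i, x i)

lemma measurable_mimicReport (η Δ : ℝ) {ι : Type*} [Countable ι] :
    Measurable (mimicReport η Δ : (ι → ℝ) → ℝ) := by
  unfold mimicReport mimic
  refine Measurable.ite (measurableSet_le (by fun_prop) measurable_const) ?_ measurable_const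
  exact Measurable.ite (measurableSet_le measurable_const (by fun_prop)) (by fun_prop) (by fun_prop)

lemma sq_mid2_le {η Δ : ℝ} {p : ℝ × ℝ} (hp : p ∈ acc2 η Δ) (hp₁ : |p.1| ≤ Δ) :
    mid2 p ^ 2 ≤ (Δ + η * Δ / 2) ^ 2 := by
  rw [acc2, mem_ofPred_eq, max_sub_min_eq_abs', abs_le] at hp
  rw [abs_le] at hp₁
  rw [mid2, max_add_min]
  exact sq_le_sq' (by linarith) (by linarith)

section Measure

variable {α β : Type*} [MeasurableSpace α] [MeasurableSpace β] {m : Measure α}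

lemma cond_congr_of_ae_eq {s t : Set α} (h : s =ᵐ[m] t) : m[|s] = m[|t] := by
  simp only [ProbabilityTheory.cond, measure_congr h, Measure.restrict_congr_set h]

lemma cond_map {T : α → β} (hT : Measurable T) {s : Set β} (hs : MeasurableSet s) :
    (m.map T)[|s] = (m[|T ⁻¹' s]).map T := by
  rw [ProbabilityTheory.cond, ProbabilityTheory.cond, Measure.map_apply hT hs,
    Measure.restrict_map hT hs, Measure.map_smul]

lemma integral_cond_le_integral_cond_map {T : α → β} (hT : Measurable T) {A : Set α}
    {B : Set β} (hB : MeasurableSet B) (hAB : T ⁻¹' B =ᵐ[m] A) {g : α → ℝ} {h : β → ℝ}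
    (hint : Integrable h ((m.map T)[|B])) (hg : 0 ≤ᵐ[m[|A]] g)
    (hgh : ∀ᵐ p ∂m[|A], g p ≤ h (T p)) :
    ∫ p, g p ∂m[|A] ≤ ∫ q, h q ∂(m.map T)[|B] := by
  rw [cond_map hT hB, cond_congr_of_ae_eq hAB] at hint ⊢
  rw [integral_map hT.aemeasurable hint.aestronglyMeasurable]
  exact integral_mono_of_nonneg hg
    ((integrable_map_measure hint.aestronglyMeasurable hT.aemeasurable).mp hint) hgh

lemma integral_le_of_ae_le_of_isZeroOrProbabilityMeasure (ρ : Measure α)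
    [IsZeroOrProbabilityMeasure ρ] {f : α → ℝ} {C : ℝ} (hC : 0 ≤ C) (hf : 0 ≤ᵐ[ρ] f)
    (hfC : ∀ᵐ p ∂ρ, f p ≤ C) : ∫ p, f p ∂ρ ≤ C :=
  calc ∫ p, f p ∂ρ ≤ ∫ _, C ∂ρ := integral_mono_of_nonneg hf (integrable_const C) hfC
    _ = ρ.real univ * C := by rw [integral_const, smul_eq_mul]
    _ ≤ C := mul_le_of_le_one_left hC measureReal_le_one

end Measure

section Reduction

variable {N : ℕ} {η Δ : ℝ} {μ : Measure ℝ} [IsProbabilityMeasure μ]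

lemma ae_abs_fst_le (hμ : μ (Icc (-Δ) Δ) = 1) {β : Type*} [MeasurableSpace β]
    (ρ : Measure β) : ∀ᵐ p ∂μ.prod ρ, |p.1| ≤ Δ := by
  have hIcc : ∀ᵐ x ∂μ, x ∈ Icc (-Δ) Δ :=
    (ae_iff_measure_eq measurableSet_Icc.nullMeasurableSet).mpr (by rw [measure_univ]; exact hμ)
  exact Measure.quasiMeasurePreserving_fst.ae (hIcc.mono fun _ hx => abs_le.mpr hx)

lemma measurableSet_acc2 : MeasurableSet (acc2 η Δ) :=
  measurableSet_le (by fun_prop) measurable_const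

lemma measurableSet_accN : MeasurableSet (accN N η Δ) :=
  measurableSet_le (by fun_prop) measurable_const

lemma ae_sq_mid2_le (hμ : μ (Icc (-Δ) Δ) = 1) (κ : Measure ℝ) :
    ∀ᵐ p ∂(μ.prod κ)[|acc2 η Δ], mid2 p ^ 2 ≤ (Δ + η * Δ / 2) ^ 2 := by
  filter_upwards [ae_cond_mem measurableSet_acc2,
    cond_absolutelyContinuous.ae_le (ae_abs_fst_le hμ κ)] with p hp hp₁
  exact sq_mid2_le hp hp₁

lemma integrable_sq_mid2 (hμ : μ (Icc (-Δ) Δ) = 1) (κ : Measure ℝ) :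
    Integrable (fun p => mid2 p ^ 2) ((μ.prod κ)[|acc2 η Δ]) := by
  refine .of_bound (by unfold mid2; fun_prop) ((Δ + η * Δ / 2) ^ 2) ?_
  filter_upwards [ae_sq_mid2_le hμ κ] with p hp
  rwa [Real.norm_of_nonneg (sq_nonneg _)]

lemma bddAbove_MSE_2 (hμ : μ (Icc (-Δ) Δ) = 1) (α : ℝ) :
    BddAbove {r | ∃ κ : Measure ℝ, IsProbabilityMeasure κ ∧
      α ≤ PA_2 η Δ μ κ ∧ r = MSE_2 η Δ μ κ} := by
  refine ⟨(Δ + η * Δ / 2) ^ 2, ?_⟩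
  rintro _ ⟨κ, -, -, rfl⟩
  exact integral_le_of_ae_le_of_isZeroOrProbabilityMeasure _ (sq_nonneg _)
    (ae_of_all _ fun _ => sq_nonneg _) (ae_sq_mid2_le hμ κ)

variable (ν : Measure (Fin (N - 1) → ℝ))

lemma prod_map_mimicReport [SFinite ν] :
    μ.prod (ν.map (mimicReport η Δ)) = (μ.prod ν).map (Prod.map id (mimicReport η Δ)) := by
  rw [← Measure.map_prod_map _ _ measurable_id (measurable_mimicReport η Δ), Measure.map_id]

lemma preimage_acc2_ae_eq_accN (hΔ : 0 < Δ) (hη : 2 ≤ η) (hμ : μ (Icc (-Δ) Δ) = 1) :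
    Prod.map id (mimicReport η Δ) ⁻¹' acc2 η Δ =ᵐ[μ.prod ν] accN N η Δ := by
  filter_upwards [ae_abs_fst_le hμ ν] with p hp
  refine propext ?_
  change max p.1 (mimicReport η Δ p.2) - min p.1 (mimicReport η Δ p.2) ≤ η * Δ ↔ _
  rw [max_sub_min_eq_abs']
  exact abs_sub_mimic_le_iff hη hΔ hp (iInf_le_iSup_of_finite p.2)

lemma PA_2_mimicReport [SFinite ν] (hΔ : 0 < Δ) (hη : 2 ≤ η) (hμ : μ (Icc (-Δ) Δ) = 1) :
    PA_2 η Δ μ (ν.map (mimicReport η Δ)) = PA_N N η Δ μ ν := by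
  rw [PA_2, PA_N, prod_map_mimicReport,
    Measure.map_apply (measurable_id.prodMap (measurable_mimicReport η Δ)) measurableSet_acc2,
    measure_congr (preimage_acc2_ae_eq_accN ν hΔ hη hμ)]

lemma MSE_N_le_MSE_2_mimicReport [SFinite ν] (hΔ : 0 < Δ) (hη : 2 ≤ η)
    (hμ : μ (Icc (-Δ) Δ) = 1) :
    MSE_N N η Δ μ ν ≤ MSE_2 η Δ μ (ν.map (mimicReport η Δ)) := by
  have hint := integrable_sq_mid2 (η := η) hμ (ν.map (mimicReport η Δ))
  rw [prod_map_mimicReport] at hint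
  rw [MSE_N, MSE_2, prod_map_mimicReport]
  refine integral_cond_le_integral_cond_map (measurable_id.prodMap (measurable_mimicReport η Δ))
    measurableSet_acc2 (preimage_acc2_ae_eq_accN ν hΔ hη hμ) hint
    (ae_of_all _ fun _ => sq_nonneg _) ?_
  filter_upwards [ae_cond_mem measurableSet_accN] with p hp
  rw [midN, mid2, max_add_min, div_pow, div_pow]
  exact div_le_div_of_nonneg_right
    (sq_max_add_min_le_sq_add_mimic (iInf_le_iSup_of_finite p.2) hp) (by positivity)

end Reduction

theorem stmt6_general {N : ℕ} {η Δ : ℝ} (hΔ : 0 < Δ) (hη : 2 ≤ η)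
    (μ : Measure ℝ) [IsProbabilityMeasure μ] (hμ : μ (Set.Icc (-Δ) Δ) = 1) :
    ∀ α : ℝ, 0 < α → α ≤ 1 → cN N η Δ μ α ≤ c2 η Δ μ α := by
  intro α _ _
  refine Real.sSup_le ?_ (Real.sSup_nonneg ?_)
  · rintro _ ⟨ν, hν, hα, rfl⟩
    refine (MSE_N_le_MSE_2_mimicReport ν hΔ hη hμ).trans (le_csSup (bddAbove_MSE_2 hμ α) ?_)
    exact ⟨_, Measure.isProbabilityMeasure_map (measurable_mimicReport η Δ).aemeasurable,
      (PA_2_mimicReport ν hΔ hη hμ).symm ▸ hα, rfl⟩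
  · rintro _ ⟨κ, -, -, rfl⟩
    exact integral_nonneg fun _ => sq_nonneg _

theorem stmt6 {N : ℕ} (hN : 2 ≤ N) {η Δ : ℝ} (hΔ : 0 < Δ) (hη : 2 ≤ η)
    (μ : Measure ℝ) [IsProbabilityMeasure μ] (hμ : μ (Set.Icc (-Δ) Δ) = 1) :
    ∀ α : ℝ, 0 < α → α ≤ 1 → cN N η Δ μ α ≤ c2 η Δ μ α :=
  stmt6_general hΔ hη μ hμ

end
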